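/- arXiv:2504.12532 — 6 statements merged into one kernel-verified Lean document; each statement's English description precedes it below -/
import Mathlib

section
/- For every x ∈ ℝ^D and all indices i, j ∈ {1, …, D}, the proxy score covariance equals the inverse noise covariance plus the Hessian of the log-marginal: C_{ij}(x) = (S^{-1})_{ij} + ∂²/∂x_i∂x_j log p(x). -/
open Matrix MeasureTheory BigOperators

/-- Partial derivative of a scalar function on `ℝ^D` in coordinate `i`. -/
noncomputable def pderiv' {D : ℕ} (i : Fin D) (f : (Fin D → ℝ) → ℝ) (x : Fin D → ℝ) : ℝ :=
  deriv (fun t => f (Function.update x i t)) (x i)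

/-- Multivariate Gaussian density `N(x; m, S)`. -/
noncomputable def gaussDensity {D : ℕ} (S : Matrix (Fin D) (Fin D) ℝ) (m x : Fin D → ℝ) : ℝ :=
  ((2 * Real.pi) ^ D * S.det) ^ (-(1/2) : ℝ) *
    Real.exp (-((x - m) ⬝ᵥ S⁻¹.mulVec (x - m)) / 2)

/-- Noise-corrupted marginal `p(x) = (1/M) ∑ₘ N(x; α μₘ, S)`. -/
noncomputable def marginal {D M : ℕ} (μ : Fin M → Fin D → ℝ) (α : ℝ)
    (S : Matrix (Fin D) (Fin D) ℝ) (x : Fin D → ℝ) : ℝ :=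
  (M : ℝ)⁻¹ * ∑ m, gaussDensity S (α • μ m) x

/-- The score `s(x) = ∇ₓ log p(x)`. -/
noncomputable def score {D M : ℕ} (μ : Fin M → Fin D → ℝ) (α : ℝ)
    (S : Matrix (Fin D) (Fin D) ℝ) (x : Fin D → ℝ) : Fin D → ℝ :=
  fun i => pderiv' i (fun y => Real.log (marginal μ α S y)) x

/-- The proxy score `s̃(x; x₀) = S⁻¹ (α x₀ − x)`. -/
noncomputable def proxyScore {D : ℕ} (α : ℝ) (S : Matrix (Fin D) (Fin D) ℝ)
    (x x₀ : Fin D → ℝ) : Fin D → ℝ :=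
  S⁻¹.mulVec (α • x₀ - x)

/-- Posterior weights `wₘ(x) = N(x; α μₘ, S) / ∑ₘ' N(x; α μₘ', S)`. -/
noncomputable def postW {D M : ℕ} (μ : Fin M → Fin D → ℝ) (α : ℝ)
    (S : Matrix (Fin D) (Fin D) ℝ) (m : Fin M) (x : Fin D → ℝ) : ℝ :=
  gaussDensity S (α • μ m) x / ∑ m', gaussDensity S (α • μ m') x


/-- Proxy score covariance `C(x) = ∑ₘ wₘ(x) s̃(x;μₘ) s̃(x;μₘ)ᵀ − s(x) s(x)ᵀ`. -/
noncomputable def proxyCov {D M : ℕ} (μ : Fin M → Fin D → ℝ) (α : ℝ)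
    (S : Matrix (Fin D) (Fin D) ℝ) (x : Fin D → ℝ) : Matrix (Fin D) (Fin D) ℝ :=
  Matrix.of fun i j =>
    (∑ m, postW μ α S m x * (proxyScore α S x (μ m) i * proxyScore α S x (μ m) j)) -
      score μ α S x i * score μ α S x j

/- ===== Auxiliary lemmas ===== -/

lemma gauss_pos {D : ℕ} {S : Matrix (Fin D) (Fin D) ℝ} (hS : S.PosDef) (c x : Fin D → ℝ) :
    0 < gaussDensity S c x := by
  have hdet := hS.det_pos
  have h1 : (0:ℝ) < (2 * Real.pi) ^ D * S.det :=
    mul_pos (pow_pos (by positivity) D) hdet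
  exact mul_pos (Real.rpow_pos_of_pos h1 _) (Real.exp_pos _)

lemma invSymm {D : ℕ} {S : Matrix (Fin D) (Fin D) ℝ} (hS : S.PosDef) : (S⁻¹)ᵀ = S⁻¹ := by
  rw [Matrix.transpose_nonsing_inv]
  congr 1
  simpa using hS.1.eq

lemma hasDerivAt_update' {D : ℕ} (x : Fin D → ℝ) (j k : Fin D) (c : Fin D → ℝ) :
    HasDerivAt (fun t => Function.update x j t k - c k) (if k = j then 1 else 0) (x j) := by
  by_cases h : k = j
  · subst h
    simpa [Function.update_self] using (hasDerivAt_id (x k)).sub_const (c k)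
  · simp only [Function.update_apply, h, if_neg, if_false]
    simpa [h] using (hasDerivAt_const (x j) (x k - c k))

lemma hasDerivAt_quad {D : ℕ} (A : Matrix (Fin D) (Fin D) ℝ) (hA : Aᵀ = A)
    (x c : Fin D → ℝ) (j : Fin D) :
    HasDerivAt (fun t => (Function.update x j t - c) ⬝ᵥ A.mulVec (Function.update x j t - c))
      (2 * A.mulVec (x - c) j) (x j) := by
  have hmv : ∀ k, HasDerivAt (fun t => A.mulVec (Function.update x j t - c) k) (A k j) (x j) := by
    intro k
    have : HasDerivAt (fun t => ∑ l, A k l * (Function.update x j t l - c l))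
        (∑ l, A k l * (if l = j then 1 else 0)) (x j) := by
      apply HasDerivAt.fun_sum
      intro l _
      exact (hasDerivAt_update' x j l c).const_mul (A k l)
    simpa [Matrix.mulVec, dotProduct, Pi.sub_apply, mul_ite, mul_one, mul_zero,
      Finset.sum_ite_eq'] using this
  have h : HasDerivAt (fun t => ∑ k, (Function.update x j t k - c k) *
        A.mulVec (Function.update x j t - c) k)
      (∑ k, ((if k = j then 1 else 0) * A.mulVec (x - c) k + (x k - c k) * A k j)) (x j) := by
    apply HasDerivAt.fun_sum
    intro k _
    have := (hasDerivAt_update' x j k c).fun_mul (hmv k)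
    simpa [Pi.sub_apply] using this
  have key : (∑ k, ((if k = j then 1 else 0) * A.mulVec (x - c) k + (x k - c k) * A k j))
      = 2 * A.mulVec (x - c) j := by
    rw [Finset.sum_add_distrib]
    have h1 : (∑ k, (if k = j then 1 else 0) * A.mulVec (x - c) k) = A.mulVec (x - c) j := by
      simp [Finset.sum_ite_eq', ite_mul]
    have h2 : (∑ k, (x k - c k) * A k j) = A.mulVec (x - c) j := by
      simp only [Matrix.mulVec, dotProduct, Pi.sub_apply]
      refine Finset.sum_congr rfl fun k _ => ?_
      have hkj : A j k = A k j := by conv_lhs => rw [← hA, Matrix.transpose_apply]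
      rw [hkj]; ring
    rw [h1, h2]; ring
  rw [key] at h
  convert h using 2
  rfl

lemma hasDerivAt_gauss {D : ℕ} {S : Matrix (Fin D) (Fin D) ℝ} (hS : S.PosDef)
    (c x : Fin D → ℝ) (j : Fin D) :
    HasDerivAt (fun t => gaussDensity S c (Function.update x j t))
      (gaussDensity S c x * (S⁻¹.mulVec (c - x) j)) (x j) := by
  have hq := hasDerivAt_quad S⁻¹ (invSymm hS) x c j
  have h1 : HasDerivAt
      (fun t => -((Function.update x j t - c) ⬝ᵥ S⁻¹.mulVec (Function.update x j t - c)) / 2)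
      (-(S⁻¹.mulVec (x - c) j)) (x j) := by
    have := hq.fun_neg.div_const 2
    exact this.congr_deriv (by ring)
  have h2 := (h1.exp).const_mul (((2 * Real.pi) ^ D * S.det) ^ (-(1/2) : ℝ))
  have hneg : S⁻¹.mulVec (c - x) j = -(S⁻¹.mulVec (x - c) j) := by
    rw [show c - x = -(x - c) by ring, Matrix.mulVec_neg, Pi.neg_apply]
  simp only [Function.update_eq_self] at h2
  unfold gaussDensity
  rw [hneg]; exact h2.congr_deriv (by ring)

lemma hasDerivAt_proxy {D : ℕ} (α : ℝ) (S : Matrix (Fin D) (Fin D) ℝ) (x x₀ : Fin D → ℝ)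
    (i j : Fin D) :
    HasDerivAt (fun t => proxyScore α S (Function.update x i t) x₀ j) (-(S⁻¹ j i)) (x i) := by
  have h : HasDerivAt (fun t => ∑ k, S⁻¹ j k * ((α • x₀) k - Function.update x i t k))
      (∑ k, S⁻¹ j k * -(if k = i then 1 else 0)) (x i) := by
    apply HasDerivAt.fun_sum
    intro k _
    have := ((hasDerivAt_update' x i k (α • x₀)).fun_neg).const_mul (S⁻¹ j k)
    exact this.congr_of_eventuallyEq (Filter.Eventually.of_forall fun t => by ring)
  have key : (∑ k, S⁻¹ j k * -(if k = i then 1 else 0)) = -(S⁻¹ j i) := by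
    simp [mul_ite, Finset.sum_ite_eq']
  rw [key] at h
  convert h using 2 with t
  rfl

lemma sumGauss_pos {D M : ℕ} (hM : 1 ≤ M) (μ : Fin M → Fin D → ℝ) (α : ℝ)
    {S : Matrix (Fin D) (Fin D) ℝ} (hS : S.PosDef) (x : Fin D → ℝ) :
    0 < ∑ m, gaussDensity S (α • μ m) x := by
  have : Nonempty (Fin M) := ⟨⟨0, hM⟩⟩
  exact Finset.sum_pos (fun m _ => gauss_pos hS _ x) Finset.univ_nonempty

lemma hasDerivAt_sumGauss {D M : ℕ} (μ : Fin M → Fin D → ℝ) (α : ℝ)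
    {S : Matrix (Fin D) (Fin D) ℝ} (hS : S.PosDef) (x : Fin D → ℝ) (j : Fin D) :
    HasDerivAt (fun t => ∑ m, gaussDensity S (α • μ m) (Function.update x j t))
      (∑ m, gaussDensity S (α • μ m) x * proxyScore α S x (μ m) j) (x j) := by
  apply HasDerivAt.fun_sum
  intro m _
  exact hasDerivAt_gauss hS (α • μ m) x j

lemma hasDerivAt_log_marginal {D M : ℕ} (hM : 1 ≤ M) (μ : Fin M → Fin D → ℝ) (α : ℝ)
    {S : Matrix (Fin D) (Fin D) ℝ} (hS : S.PosDef) (x : Fin D → ℝ) (j : Fin D) :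
    HasDerivAt (fun t => Real.log (marginal μ α S (Function.update x j t)))
      ((∑ m, gaussDensity S (α • μ m) x * proxyScore α S x (μ m) j) /
        (∑ m, gaussDensity S (α • μ m) x)) (x j) := by
  have hT := hasDerivAt_sumGauss μ α hS x j
  have hTpos := sumGauss_pos hM μ α hS x
  have hlog := hT.log (by simp only [Function.update_eq_self]; exact hTpos.ne')
  have heq : (fun t => Real.log (marginal μ α S (Function.update x j t))) =
      fun t => Real.log ((M : ℝ)⁻¹) +
        Real.log (∑ m, gaussDensity S (α • μ m) (Function.update x j t)) := by
    funext t
    rw [marginal, Real.log_mul (by positivity) (sumGauss_pos hM μ α hS _).ne']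
  rw [heq]
  simpa using hlog.const_add (Real.log ((M : ℝ)⁻¹))

lemma pderiv_log_marginal {D M : ℕ} (hM : 1 ≤ M) (μ : Fin M → Fin D → ℝ) (α : ℝ)
    {S : Matrix (Fin D) (Fin D) ℝ} (hS : S.PosDef) (x : Fin D → ℝ) (j : Fin D) :
    pderiv' j (fun z => Real.log (marginal μ α S z)) x =
      (∑ m, gaussDensity S (α • μ m) x * proxyScore α S x (μ m) j) /
        (∑ m, gaussDensity S (α • μ m) x) :=
  (hasDerivAt_log_marginal hM μ α hS x j).deriv

theorem proxyCov_eq_inv_add_hessian_log {D M : ℕ} (hD : 1 ≤ D) (hM : 1 ≤ M)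
    (μ : Fin M → Fin D → ℝ) (α : ℝ) (hα : 0 < α)
    (S : Matrix (Fin D) (Fin D) ℝ) (hS : S.PosDef) :
    ∀ (x : Fin D → ℝ) (i j : Fin D),
      proxyCov μ α S x i j =
        S⁻¹ i j +
          pderiv' i (fun y => pderiv' j (fun z => Real.log (marginal μ α S z)) y) x := by
  intro x i j
  have hTpos := sumGauss_pos hM μ α hS x
  -- second derivative
  have hN : HasDerivAt (fun t => ∑ m, gaussDensity S (α • μ m) (Function.update x i t) *
        proxyScore α S (Function.update x i t) (μ m) j)
      (∑ m, (gaussDensity S (α • μ m) x * proxyScore α S x (μ m) i * proxyScore α S x (μ m) j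
        + gaussDensity S (α • μ m) x * -(S⁻¹ j i))) (x i) := by
    apply HasDerivAt.fun_sum
    intro m _
    have h1 := hasDerivAt_gauss hS (α • μ m) x i
    have h2 := hasDerivAt_proxy α S x (μ m) i j
    have := h1.mul h2
    simp only [Function.update_eq_self] at this
    exact this
  have hT := hasDerivAt_sumGauss μ α hS x i
  have hQ := hN.div hT (by simp only [Function.update_eq_self]; exact hTpos.ne')
  simp only [Function.update_eq_self] at hQ
  have hfun : (fun t => pderiv' j (fun z => Real.log (marginal μ α S z))
        (Function.update x i t)) =
      fun t => (∑ m, gaussDensity S (α • μ m) (Function.update x i t) *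
          proxyScore α S (Function.update x i t) (μ m) j) /
        (∑ m, gaussDensity S (α • μ m) (Function.update x i t)) := by
    funext t
    exact pderiv_log_marginal hM μ α hS (Function.update x i t) j
  have hsecond : pderiv' i (fun y => pderiv' j (fun z => Real.log (marginal μ α S z)) y) x =
      ((∑ m, (gaussDensity S (α • μ m) x * proxyScore α S x (μ m) i * proxyScore α S x (μ m) j
          + gaussDensity S (α • μ m) x * -(S⁻¹ j i))) *
        (∑ m, gaussDensity S (α • μ m) x) -
        (∑ m, gaussDensity S (α • μ m) x * proxyScore α S x (μ m) j) *
        (∑ m, gaussDensity S (α • μ m) x * proxyScore α S x (μ m) i)) /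
        (∑ m, gaussDensity S (α • μ m) x) ^ 2 := by
    have hrfl : pderiv' i (fun y => pderiv' j (fun z => Real.log (marginal μ α S z)) y) x
        = deriv (fun t => pderiv' j (fun z => Real.log (marginal μ α S z))
            (Function.update x i t)) (x i) := rfl
    rw [hrfl, hfun]
    exact hQ.deriv
  rw [hsecond]
  -- abbreviations
  set T := ∑ m, gaussDensity S (α • μ m) x with hT'
  set Ni := ∑ m, gaussDensity S (α • μ m) x * proxyScore α S x (μ m) i with hNi
  set Nj := ∑ m, gaussDensity S (α • μ m) x * proxyScore α S x (μ m) j with hNj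
  set Nij := ∑ m, gaussDensity S (α • μ m) x * proxyScore α S x (μ m) i
      * proxyScore α S x (μ m) j with hNij
  have hsum : (∑ m, (gaussDensity S (α • μ m) x * proxyScore α S x (μ m) i
        * proxyScore α S x (μ m) j + gaussDensity S (α • μ m) x * -(S⁻¹ j i)))
      = Nij + T * -(S⁻¹ j i) := by
    rw [Finset.sum_add_distrib, hNij, hT', Finset.sum_mul]
  rw [hsum]
  -- LHS
  have hscore : ∀ k, score μ α S x k =
      (∑ m, gaussDensity S (α • μ m) x * proxyScore α S x (μ m) k) / T := fun k =>
    pderiv_log_marginal hM μ α hS x k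
  have hCov : proxyCov μ α S x i j = Nij / T - (Ni / T) * (Nj / T) := by
    show (∑ m, postW μ α S m x * (proxyScore α S x (μ m) i * proxyScore α S x (μ m) j)) -
        score μ α S x i * score μ α S x j = _
    rw [hscore i, hscore j, hNi, hNj]
    congr 1
    rw [hNij, Finset.sum_div]
    refine Finset.sum_congr rfl fun m _ => ?_
    rw [postW, hT']
    ring
  rw [hCov]
  have hsymm : S⁻¹ i j = S⁻¹ j i := by
    conv_lhs => rw [← invSymm hS, Matrix.transpose_apply]
  rw [hsymm]
  field_simp
  ring
end

section
/- The Hessian of the log-density of an equal-weight Gaussian mixture with common covariance Σ̃ satisfies, for every x ∈ ℝ^D, ∇²_x log q(x) = −Σ̃^{-1} + α² Σ̃^{-1} Cov_{w̃}(μ)(x) Σ̃^{-1}, where Cov_{w̃}(μ)(x) := Σ_m w̃_m(x) μ_m μ_mᵀ − (Σ_m w̃_m(x) μ_m)(Σ_m w̃_m(x) μ_m)ᵀ. -/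
open Matrix BigOperators

/-- Equal-weight Gaussian mixture `q(x) = (1/M) ∑ₘ N(x; α μₘ, Σ̃)`. -/
noncomputable def mixDensity {D M : ℕ} (μ : Fin M → Fin D → ℝ) (α : ℝ)
    (Sig : Matrix (Fin D) (Fin D) ℝ) (x : Fin D → ℝ) : ℝ :=
  (M : ℝ)⁻¹ * ∑ m, gaussDensity Sig (α • μ m) x

/-- Posterior weights `w̃ₘ(x) = N(x; α μₘ, Σ̃) / ∑ₘ' N(x; α μₘ', Σ̃)`. -/
noncomputable def mixW {D M : ℕ} (μ : Fin M → Fin D → ℝ) (α : ℝ)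
    (Sig : Matrix (Fin D) (Fin D) ℝ) (m : Fin M) (x : Fin D → ℝ) : ℝ :=
  gaussDensity Sig (α • μ m) x / ∑ m', gaussDensity Sig (α • μ m') x

/-- Posterior mean of the mixture centers, `μ̄(x) = ∑ₘ w̃ₘ(x) μₘ`. -/
noncomputable def mixMean {D M : ℕ} (μ : Fin M → Fin D → ℝ) (α : ℝ)
    (Sig : Matrix (Fin D) (Fin D) ℝ) (x : Fin D → ℝ) : Fin D → ℝ :=
  ∑ m, mixW μ α Sig m x • μ m

/-- Posterior covariance of the mixture centers,
`Cov_w̃(μ)(x) = ∑ₘ w̃ₘ(x) μₘ μₘᵀ − μ̄(x) μ̄(x)ᵀ`. -/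
noncomputable def mixCovMu {D M : ℕ} (μ : Fin M → Fin D → ℝ) (α : ℝ)
    (Sig : Matrix (Fin D) (Fin D) ℝ) (x : Fin D → ℝ) : Matrix (Fin D) (Fin D) ℝ :=
  (∑ m, mixW μ α Sig m x • vecMulVec (μ m) (μ m)) -
    vecMulVec (mixMean μ α Sig x) (mixMean μ α Sig x)

section Helpers

variable {D : ℕ}

lemma update_decomp (x : Fin D → ℝ) (j : Fin D) (t : ℝ) :
    Function.update x j t = Function.update x j 0 + t • (Pi.single j 1 : Fin D → ℝ) := by
  funext k
  by_cases h : k = j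
  · subst h; simp
  · simp [Function.update_of_ne h, Pi.single_eq_of_ne h]

lemma symm_dot (A : Matrix (Fin D) (Fin D) ℝ) (hA : Aᵀ = A) (v w : Fin D → ℝ) :
    v ⬝ᵥ A.mulVec w = w ⬝ᵥ A.mulVec v := by
  rw [Matrix.dotProduct_mulVec, ← Matrix.mulVec_transpose, hA, dotProduct_comm]

lemma quad_hasDeriv (A : Matrix (Fin D) (Fin D) ℝ) (hA : Aᵀ = A) (b x : Fin D → ℝ)
    (j : Fin D) (t : ℝ) :
    HasDerivAt (fun s => (Function.update x j s - b) ⬝ᵥ A.mulVec (Function.update x j s - b))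
      (2 * A.mulVec (Function.update x j t - b) j) t := by
  set e : Fin D → ℝ := Pi.single j 1 with he
  set w : Fin D → ℝ := Function.update x j 0 - b with hw
  have hupd : ∀ s : ℝ, Function.update x j s - b = w + s • e := by
    intro s
    funext k
    rw [hw, update_decomp x j s]
    simp [Pi.add_apply, Pi.sub_apply]
    ring
  have hquad : ∀ s : ℝ, (w + s • e) ⬝ᵥ A.mulVec (w + s • e)
      = w ⬝ᵥ A.mulVec w + 2 * (e ⬝ᵥ A.mulVec w) * s + (e ⬝ᵥ A.mulVec e) * s ^ 2 := by
    intro s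
    have hsym : w ⬝ᵥ A.mulVec e = e ⬝ᵥ A.mulVec w := symm_dot A hA w e
    simp only [Matrix.mulVec_add, Matrix.mulVec_smul, dotProduct_add, add_dotProduct,
      dotProduct_smul, smul_dotProduct, smul_eq_mul, hsym]
    ring
  have hfun : (fun s => (Function.update x j s - b) ⬝ᵥ A.mulVec (Function.update x j s - b))
      = fun s => w ⬝ᵥ A.mulVec w + 2 * (e ⬝ᵥ A.mulVec w) * s + (e ⬝ᵥ A.mulVec e) * s ^ 2 :=
    funext fun s => by rw [hupd s, hquad s]
  rw [hfun]
  have h2 : HasDerivAt (fun s : ℝ => s ^ 2) (2 * t) t := by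
    simpa using hasDerivAt_pow 2 t
  have hpoly := ((hasDerivAt_const t (w ⬝ᵥ A.mulVec w)).add
    ((hasDerivAt_id t).const_mul (2 * (e ⬝ᵥ A.mulVec w)))).add (h2.const_mul (e ⬝ᵥ A.mulVec e))
  refine hpoly.congr_deriv ?_
  rw [hupd t]
  simp only [Matrix.mulVec_add, Matrix.mulVec_smul, Pi.add_apply, Pi.smul_apply, smul_eq_mul, he]
  have h3 : ∀ z : Fin D → ℝ, (Pi.single j (1:ℝ)) ⬝ᵥ A.mulVec z = A.mulVec z j :=
    fun z => single_one_dotProduct j _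
  rw [h3 w, h3 e]
  ring

lemma lin_hasDeriv (A : Matrix (Fin D) (Fin D) ℝ) (b x : Fin D → ℝ) (i j : Fin D) (t : ℝ) :
    HasDerivAt (fun s => A.mulVec (Function.update x i s - b) j) (A j i) t := by
  have hupd : ∀ s : ℝ, Function.update x i s - b
      = (Function.update x i 0 - b) + s • (Pi.single i 1 : Fin D → ℝ) := by
    intro s
    funext k
    rw [update_decomp x i s]
    simp [Pi.add_apply, Pi.sub_apply]
    ring
  have hfun : (fun s => A.mulVec (Function.update x i s - b) j)
      = fun s => A.mulVec (Function.update x i 0 - b) j + A j i * s := by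
    funext s
    rw [hupd s]
    simp only [Matrix.mulVec_add, Matrix.mulVec_smul, Pi.add_apply, Pi.smul_apply, smul_eq_mul]
    congr 1
    rw [Matrix.mulVec_single]
    simp [mul_comm]
  rw [hfun]
  exact ((hasDerivAt_const t _).add ((hasDerivAt_id t).const_mul (A j i))).congr_deriv (by simp)

lemma gauss_pos_s6 (Sig : Matrix (Fin D) (Fin D) ℝ) (hdet : 0 < Sig.det) (b y : Fin D → ℝ) :
    0 < gaussDensity Sig b y := by
  have h1 : (0:ℝ) < (2 * Real.pi) ^ D * Sig.det :=
    mul_pos (pow_pos (by positivity) D) hdet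
  exact mul_pos (Real.rpow_pos_of_pos h1 _) (Real.exp_pos _)

lemma gauss_hasDeriv (Sig : Matrix (Fin D) (Fin D) ℝ) (hA : Sig⁻¹ᵀ = Sig⁻¹)
    (b x : Fin D → ℝ) (j : Fin D) (t : ℝ) :
    HasDerivAt (fun s => gaussDensity Sig b (Function.update x j s))
      (gaussDensity Sig b (Function.update x j t)
        * -(Sig⁻¹.mulVec (Function.update x j t - b) j)) t := by
  have hq := quad_hasDeriv Sig⁻¹ hA b x j t
  have h1 := ((hq.fun_neg.div_const 2).exp).const_mul
    (((2 * Real.pi) ^ D * Sig.det) ^ (-(1/2) : ℝ))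
  refine h1.congr_deriv ?_
  unfold gaussDensity
  ring

end Helpers

section Alg

lemma cov_alg {M : ℕ} (g u v : Fin M → ℝ) (α c P Q S : ℝ)
    (hS : ∑ m, g m = S) (hS0 : S ≠ 0) :
    -(((∑ m, (g m * -(P - α * u m) * (Q - α * v m) + g m * c)) * S
        - (∑ m, g m * (Q - α * v m)) * (∑ m, g m * -(P - α * u m))) / S ^ 2)
      = -c + α ^ 2 * ((∑ m, g m / S * (u m * v m))
        - (∑ m, g m / S * u m) * (∑ m, g m / S * v m)) := by
  have h1 : ∑ m, (g m * -(P - α * u m) * (Q - α * v m) + g m * c)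
      = (c - P * Q) * S + (α * P) * (∑ m, g m * v m) + (α * Q) * (∑ m, g m * u m)
        - α ^ 2 * (∑ m, g m * (u m * v m)) := by
    rw [← hS]
    rw [Finset.mul_sum, Finset.mul_sum, Finset.mul_sum, Finset.mul_sum,
      ← Finset.sum_add_distrib, ← Finset.sum_add_distrib, ← Finset.sum_sub_distrib]
    exact Finset.sum_congr rfl fun m _ => by ring
  have h2 : ∑ m, g m * (Q - α * v m) = Q * S - α * (∑ m, g m * v m) := by
    rw [← hS, Finset.mul_sum, Finset.mul_sum, ← Finset.sum_sub_distrib]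
    exact Finset.sum_congr rfl fun m _ => by ring
  have h3 : ∑ m, g m * -(P - α * u m) = -(P * S) + α * (∑ m, g m * u m) := by
    rw [Finset.sum_congr rfl fun m _ => show g m * -(P - α * u m)
        = α * (g m * u m) - P * g m from by ring,
      Finset.sum_sub_distrib, ← Finset.mul_sum, ← Finset.mul_sum, hS]
    ring
  have h4 : ∀ f : Fin M → ℝ, ∑ m, g m / S * f m = (∑ m, g m * f m) / S := by
    intro f
    rw [Finset.sum_div]
    exact Finset.sum_congr rfl fun m _ => by ring
  rw [h1, h2, h3, h4, h4, h4]
  field_simp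
  ring

end Alg
section MatrixSide

variable {D M : ℕ}

lemma sandwich (A : Matrix (Fin D) (Fin D) ℝ) (hA : Aᵀ = A) (u v : Fin D → ℝ) (i j : Fin D) :
    (A * vecMulVec u v * A) i j = A.mulVec u i * A.mulVec v j := by
  have hAs : ∀ k l : Fin D, A k l = A l k := fun k l => by
    conv_lhs => rw [← hA]
    rfl
  simp only [Matrix.mul_apply, vecMulVec_apply, Matrix.mulVec, dotProduct,
    Finset.sum_mul, Finset.mul_sum]
  exact Finset.sum_congr rfl fun k _ => Finset.sum_congr rfl fun l _ => by
    rw [hAs k j]; ring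

lemma mulVec_mixMean (μ : Fin M → Fin D → ℝ) (α : ℝ) (Sig : Matrix (Fin D) (Fin D) ℝ)
    (x : Fin D → ℝ) (k : Fin D) :
    Sig⁻¹.mulVec (mixMean μ α Sig x) k = ∑ m, mixW μ α Sig m x * Sig⁻¹.mulVec (μ m) k := by
  simp only [mixMean, Matrix.mulVec, dotProduct, Finset.sum_apply, Pi.smul_apply,
    smul_eq_mul, Finset.mul_sum]
  rw [Finset.sum_comm]
  exact Finset.sum_congr rfl fun m _ => Finset.sum_congr rfl fun l _ => by ring

lemma rhs_entry (μ : Fin M → Fin D → ℝ) (α : ℝ) (Sig : Matrix (Fin D) (Fin D) ℝ)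
    (hA : Sig⁻¹ᵀ = Sig⁻¹) (x : Fin D → ℝ) (i j : Fin D) :
    (-Sig⁻¹ + α ^ 2 • (Sig⁻¹ * mixCovMu μ α Sig x * Sig⁻¹)) i j
      = -(Sig⁻¹ j i) + α ^ 2 *
        ((∑ m, mixW μ α Sig m x * (Sig⁻¹.mulVec (μ m) i * Sig⁻¹.mulVec (μ m) j))
          - (∑ m, mixW μ α Sig m x * Sig⁻¹.mulVec (μ m) i)
            * (∑ m, mixW μ α Sig m x * Sig⁻¹.mulVec (μ m) j)) := by
  have hAs : Sig⁻¹ i j = Sig⁻¹ j i := by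
    conv_lhs => rw [← hA]
    rfl
  have hcov : (Sig⁻¹ * mixCovMu μ α Sig x * Sig⁻¹) i j
      = (∑ m, mixW μ α Sig m x * (Sig⁻¹.mulVec (μ m) i * Sig⁻¹.mulVec (μ m) j))
        - Sig⁻¹.mulVec (mixMean μ α Sig x) i * Sig⁻¹.mulVec (mixMean μ α Sig x) j := by
    unfold mixCovMu
    rw [Matrix.mul_sub, Matrix.sub_mul, Matrix.mul_sum, Matrix.sum_mul]
    rw [Matrix.sub_apply, Matrix.sum_apply]
    rw [sandwich Sig⁻¹ hA _ _ i j]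
    congr 1
    refine Finset.sum_congr rfl fun m _ => ?_
    rw [Matrix.mul_smul, Matrix.smul_mul, Matrix.smul_apply, smul_eq_mul,
      sandwich Sig⁻¹ hA _ _ i j]
  simp only [Matrix.add_apply, Matrix.neg_apply, Matrix.smul_apply, smul_eq_mul]
  rw [hcov, hAs, mulVec_mixMean, mulVec_mixMean]

end MatrixSide
section Main

lemma logq_deriv {D M : ℕ} (hM : 1 ≤ M) (μ : Fin M → Fin D → ℝ) (α : ℝ)
    (Sig : Matrix (Fin D) (Fin D) ℝ) (hdet : 0 < Sig.det) (hA : Sig⁻¹ᵀ = Sig⁻¹)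
    (y : Fin D → ℝ) (j : Fin D) :
    pderiv' j (fun z => Real.log (mixDensity μ α Sig z)) y
      = -∑ m, mixW μ α Sig m y * Sig⁻¹.mulVec (y - α • μ m) j := by
  have hMpos : (0:ℝ) < (M:ℝ) := by exact_mod_cast hM
  have hM0 : ((M:ℝ))⁻¹ ≠ 0 := by positivity
  have : Nonempty (Fin M) := ⟨⟨0, hM⟩⟩
  have hSpos : ∀ z, 0 < ∑ m, gaussDensity Sig (α • μ m) z := fun z =>
    Finset.sum_pos (fun m _ => gauss_pos_s6 Sig hdet _ _) Finset.univ_nonempty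
  have hg : ∀ m ∈ Finset.univ, HasDerivAt
      (fun t => gaussDensity Sig (α • μ m) (Function.update y j t))
      (gaussDensity Sig (α • μ m) y * -(Sig⁻¹.mulVec (y - α • μ m) j)) (y j) := by
    intro m _
    have := gauss_hasDeriv Sig hA (α • μ m) y j (y j)
    rwa [Function.update_eq_self] at this
  have hsum := (HasDerivAt.fun_sum hg).const_mul ((M:ℝ))⁻¹
  have hne : ((M:ℝ))⁻¹ * ∑ m, gaussDensity Sig (α • μ m)
      (Function.update y j (y j)) ≠ 0 := by
    rw [Function.update_eq_self]
    exact ne_of_gt (mul_pos (inv_pos.mpr hMpos) (hSpos y))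
  have hlog := hsum.log hne
  unfold pderiv'
  have hfun : (fun t => Real.log (mixDensity μ α Sig (Function.update y j t)))
      = fun t => Real.log ((M:ℝ)⁻¹ * ∑ m, gaussDensity Sig (α • μ m)
          (Function.update y j t)) := rfl
  rw [hfun, hlog.deriv, Function.update_eq_self]
  rw [mul_div_mul_left _ _ hM0, Finset.sum_div, ← Finset.sum_neg_distrib]
  exact Finset.sum_congr rfl fun m _ => by unfold mixW; ring

theorem mixture_log_hessian' {D M : ℕ} (hD : 1 ≤ D) (hM : 1 ≤ M)
    (μ : Fin M → Fin D → ℝ) (α : ℝ) (hα : 0 < α)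
    (Sig : Matrix (Fin D) (Fin D) ℝ) (hSig : Sig.PosDef) :
    ∀ (x : Fin D → ℝ) (i j : Fin D),
      pderiv' i (fun y => pderiv' j (fun z => Real.log (mixDensity μ α Sig z)) y) x =
        (-Sig⁻¹ + α ^ 2 • (Sig⁻¹ * mixCovMu μ α Sig x * Sig⁻¹)) i j := by
  intro x i j
  have hdet : 0 < Sig.det := hSig.det_pos
  have hA : Sig⁻¹ᵀ = Sig⁻¹ := by
    have := hSig.isHermitian.inv
    simpa [Matrix.IsHermitian] using this
  have : Nonempty (Fin M) := ⟨⟨0, hM⟩⟩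
  have hSpos : ∀ z, 0 < ∑ m, gaussDensity Sig (α • μ m) z := fun z =>
    Finset.sum_pos (fun m _ => gauss_pos_s6 Sig hdet _ _) Finset.univ_nonempty
  have h2 : (fun y => pderiv' j (fun z => Real.log (mixDensity μ α Sig z)) y)
      = fun y => -∑ m, mixW μ α Sig m y * Sig⁻¹.mulVec (y - α • μ m) j :=
    funext fun y => logq_deriv hM μ α Sig hdet hA y j
  rw [h2]
  unfold pderiv'
  have key : (fun t => (fun y => -∑ m, mixW μ α Sig m y * Sig⁻¹.mulVec (y - α • μ m) j)
        (Function.update x i t))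
      = fun t => -((∑ m, gaussDensity Sig (α • μ m) (Function.update x i t)
            * Sig⁻¹.mulVec (Function.update x i t - α • μ m) j)
          / (∑ m, gaussDensity Sig (α • μ m) (Function.update x i t))) := by
    funext t
    simp only [mixW]
    rw [Finset.sum_div]
    exact congrArg Neg.neg (Finset.sum_congr rfl fun m _ => by ring)
  rw [key]
  have hg' : ∀ m, HasDerivAt
      (fun t => gaussDensity Sig (α • μ m) (Function.update x i t))
      (gaussDensity Sig (α • μ m) x * -(Sig⁻¹.mulVec (x - α • μ m) i)) (x i) := by
    intro m
    have := gauss_hasDeriv Sig hA (α • μ m) x i (x i)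
    rwa [Function.update_eq_self] at this
  have hN : HasDerivAt
      (fun t => ∑ m, gaussDensity Sig (α • μ m) (Function.update x i t)
        * Sig⁻¹.mulVec (Function.update x i t - α • μ m) j)
      (∑ m, (gaussDensity Sig (α • μ m) x * -(Sig⁻¹.mulVec (x - α • μ m) i)
          * Sig⁻¹.mulVec (x - α • μ m) j
        + gaussDensity Sig (α • μ m) x * Sig⁻¹ j i)) (x i) := by
    apply HasDerivAt.fun_sum
    intro m _
    have := (hg' m).mul (lin_hasDeriv Sig⁻¹ (α • μ m) x i j (x i))
    rwa [Function.update_eq_self] at this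
  have hS : HasDerivAt (fun t => ∑ m, gaussDensity Sig (α • μ m) (Function.update x i t))
      (∑ m, gaussDensity Sig (α • μ m) x * -(Sig⁻¹.mulVec (x - α • μ m) i)) (x i) :=
    HasDerivAt.fun_sum fun m _ => hg' m
  have hSne : (∑ m, gaussDensity Sig (α • μ m) (Function.update x i (x i))) ≠ 0 := by
    rw [Function.update_eq_self]
    exact (hSpos x).ne'
  have hfinal := (hN.fun_div hS hSne).fun_neg
  rw [hfinal.deriv, Function.update_eq_self]
  rw [rhs_entry μ α Sig hA x i j]
  simp only [mixW]
  have hmv : ∀ (m : Fin M) (k : Fin D), Sig⁻¹.mulVec (x - α • μ m) k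
      = Sig⁻¹.mulVec x k - α * Sig⁻¹.mulVec (μ m) k := by
    intro m k
    rw [Matrix.mulVec_sub, Matrix.mulVec_smul]
    simp [smul_eq_mul]
  simp only [hmv]
  exact cov_alg (fun m => gaussDensity Sig (α • μ m) x)
    (fun m => Sig⁻¹.mulVec (μ m) i) (fun m => Sig⁻¹.mulVec (μ m) j)
    α (Sig⁻¹ j i) (Sig⁻¹.mulVec x i) (Sig⁻¹.mulVec x j)
    (∑ m, gaussDensity Sig (α • μ m) x) rfl (hSpos x).ne'

end Main

/-- the Hessian of the log-density of an equal-weight Gaussian mixture with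
common covariance `Σ̃` is `∇²ₓ log q(x) = −Σ̃⁻¹ + α² Σ̃⁻¹ Cov_w̃(μ)(x) Σ̃⁻¹`. -/
theorem mixture_log_hessian {D M : ℕ} (hD : 1 ≤ D) (hM : 1 ≤ M)
    (μ : Fin M → Fin D → ℝ) (α : ℝ) (hα : 0 < α)
    (Sig : Matrix (Fin D) (Fin D) ℝ) (hSig : Sig.PosDef) :
    ∀ (x : Fin D → ℝ) (i j : Fin D),
      pderiv' i (fun y => pderiv' j (fun z => Real.log (mixDensity μ α Sig z)) y) x =
        (-Sig⁻¹ + α ^ 2 • (Sig⁻¹ * mixCovMu μ α Sig x * Sig⁻¹)) i j :=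
  mixture_log_hessian' hD hM μ α hα Sig hSig
end

section
/- The fitted linear score estimator admits a kernel-smoother representation: for every φ ∈ ℝ^F, ŝ(φ) = Σ_{n=1}^P ( λ_n / (P λ̄) ) Q_n(φ) s̃_n, where Q_n(φ) := 1 + (φ_n − μ̂)ᵀ Σ̂^{-1} (φ − μ̂). -/
open Matrix MeasureTheory BigOperators

/-- Mean weight `λ̄ = (1/P) ∑ₙ λₙ`. -/
noncomputable def lbar {P : ℕ} (lam : Fin P → ℝ) : ℝ := (P : ℝ)⁻¹ * ∑ n, lam n

/-- Weighted feature mean `μ̂ = ∑ₙ λₙ φₙ / (P λ̄)`. -/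
noncomputable def muhat {P F : ℕ} (lam : Fin P → ℝ) (φ : Fin P → Fin F → ℝ) : Fin F → ℝ :=
  ((P : ℝ) * lbar lam)⁻¹ • ∑ n, lam n • φ n

/-- Weighted feature covariance `Σ̂ = ∑ₙ λₙ (φₙ − μ̂)(φₙ − μ̂)ᵀ / (P λ̄)`. -/
noncomputable def sighat {P F : ℕ} (lam : Fin P → ℝ) (φ : Fin P → Fin F → ℝ) :
    Matrix (Fin F) (Fin F) ℝ :=
  ((P : ℝ) * lbar lam)⁻¹ •
    ∑ n, lam n • vecMulVec (φ n - muhat lam φ) (φ n - muhat lam φ)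

/-- The smoothing kernel `Qₙ(φ) = 1 + (φₙ − μ̂)ᵀ Σ̂⁻¹ (φ − μ̂)`. -/
noncomputable def Qker {P F : ℕ} (lam : Fin P → ℝ) (φ : Fin P → Fin F → ℝ)
    (n : Fin P) (φv : Fin F → ℝ) : ℝ :=
  1 + (φ n - muhat lam φ) ⬝ᵥ (sighat lam φ)⁻¹.mulVec (φv - muhat lam φ)

/-- Weighted target mean `b̂ = ∑ₙ λₙ s̃ₙ / (P λ̄)`. -/
noncomputable def bhat {P D : ℕ} (lam : Fin P → ℝ) (st : Fin P → Fin D → ℝ) : Fin D → ℝ :=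
  ((P : ℝ) * lbar lam)⁻¹ • ∑ n, lam n • st n

/-- Cross-moment matrix `Ĵ = −∑ₙ λₙ (φₙ − μ̂)(s̃ₙ − b̂)ᵀ / (P λ̄)`. -/
noncomputable def jhat {P F D : ℕ} (lam : Fin P → ℝ) (φ : Fin P → Fin F → ℝ)
    (st : Fin P → Fin D → ℝ) : Matrix (Fin F) (Fin D) ℝ :=
  -(((P : ℝ) * lbar lam)⁻¹ •
    ∑ n, lam n • vecMulVec (φ n - muhat lam φ) (st n - bhat lam st))

/-- Fitted linear score estimator `ŝ(φ) = Ĵᵀ Σ̂⁻¹ (μ̂ − φ) + b̂`. -/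
noncomputable def shatFit {P F D : ℕ} (lam : Fin P → ℝ) (φ : Fin P → Fin F → ℝ)
    (st : Fin P → Fin D → ℝ) (φv : Fin F → ℝ) : Fin D → ℝ :=
  ((jhat lam φ st)ᵀ * (sighat lam φ)⁻¹).mulVec (muhat lam φ - φv) + bhat lam st

/-- the fitted linear score estimator admits a kernel-smoother representation:
`ŝ(φ) = ∑ₙ (λₙ / (P λ̄)) Qₙ(φ) s̃ₙ`. -/
theorem linear_estimator_kernel_smoother {P F D : ℕ} (hP : 1 ≤ P) (hF : 1 ≤ F) (hD : 1 ≤ D)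
    (lam : Fin P → ℝ) (hlam : ∀ n, 0 < lam n)
    (φ : Fin P → Fin F → ℝ) (st : Fin P → Fin D → ℝ)
    (hinv : IsUnit (sighat lam φ).det) :
    ∀ φv : Fin F → ℝ,
      shatFit lam φ st φv =
        ∑ n, (lam n / ((P : ℝ) * lbar lam) * Qker lam φ n φv) • st n := by
  intro φv
  have hP0 : (0:ℝ) < (P:ℝ) := by exact_mod_cast hP
  have hne : (Finset.univ : Finset (Fin P)).Nonempty := by
    simpa [Finset.univ_nonempty_iff] using Fin.pos_iff_nonempty.mp hP
  have hS : (0:ℝ) < ∑ n, lam n := Finset.sum_pos (fun n _ => hlam n) hne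
  have hPl : (P : ℝ) * lbar lam = ∑ n, lam n := by
    unfold lbar; rw [← mul_assoc, mul_inv_cancel₀ (ne_of_gt hP0), one_mul]
  have hPl0 : ((P:ℝ) * lbar lam) ≠ 0 := by rw [hPl]; exact ne_of_gt hS
  set c : ℝ := ((P:ℝ) * lbar lam)⁻¹ with hc
  set A := (sighat lam φ)⁻¹ with hA
  set μ := muhat lam φ with hμ
  set b := bhat lam st with hb
  set w := A.mulVec (φv - μ) with hw
  -- the weighted deviations sum to zero
  have hmean : ∑ n, lam n • (φ n - μ) = (0 : Fin F → ℝ) := by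
    funext k
    simp only [Finset.sum_apply, Pi.smul_apply, Pi.sub_apply, smul_eq_mul, Pi.zero_apply]
    have hμk : μ k = c * ∑ n, lam n * φ n k := by
      simp [hμ, muhat, hc, Finset.sum_apply, mul_comm]
    simp only [mul_sub, Finset.sum_sub_distrib, hμk, ← Finset.sum_mul]
    rw [hc, hPl]
    field_simp
    ring
  have hdot : ∑ n, lam n * ((φ n - μ) ⬝ᵥ w) = 0 := by
    have hk : ∀ k, ∑ n, lam n * (φ n k - μ k) = 0 := fun k => by
      have := congrFun hmean k
      simpa using this
    calc ∑ n, lam n * ((φ n - μ) ⬝ᵥ w)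
        = ∑ n, ∑ k, lam n * (φ n k - μ k) * w k := by
          simp [dotProduct, Finset.mul_sum, mul_assoc]
      _ = ∑ k, (∑ n, lam n * (φ n k - μ k)) * w k := by
          rw [Finset.sum_comm]
          simp [Finset.sum_mul]
      _ = 0 := by simp [hk]
  -- rewrite shatFit in summed form
  have hT : ∀ (u : Fin F → ℝ) (v : Fin D → ℝ), (vecMulVec u v)ᵀ = vecMulVec v u := by
    intro u v
    ext i j
    simp [vecMulVec_apply, transpose_apply, mul_comm]
  have hjt : (jhat lam φ st)ᵀ = -(c • ∑ n, lam n • vecMulVec (st n - b) (φ n - μ)) := by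
    simp only [jhat, transpose_neg, transpose_smul, transpose_sum, hT, ← hc, ← hb, ← hμ]
  have hvmv : ∀ (u : Fin D → ℝ) (v : Fin F → ℝ), (vecMulVec u v) *ᵥ w = (v ⬝ᵥ w) • u := by
    intro u v
    funext i
    simp [mulVec, vecMulVec_apply, dotProduct, Finset.mul_sum, mul_assoc, smul_eq_mul, mul_comm]
  have hmain : shatFit lam φ st φv
      = (c • ∑ n, lam n • (((φ n - μ) ⬝ᵥ w) • (st n - b))) + b := by
    unfold shatFit
    rw [← mulVec_mulVec, ← hA, ← hμ, ← hb]
    have h1 : A *ᵥ (μ - φv) = -w := by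
      rw [hw, ← mulVec_neg]; congr 1; abel
    rw [h1, hjt]
    congr 1
    have hsum_mv : ∀ (M : Fin P → Matrix (Fin D) (Fin F) ℝ),
        (∑ n, M n) *ᵥ w = ∑ n, M n *ᵥ w := by
      intro M
      funext i
      simp only [mulVec, dotProduct, Matrix.sum_apply, Finset.sum_apply, Finset.sum_mul]
      rw [Finset.sum_comm]
    rw [neg_mulVec, mulVec_neg, neg_neg, smul_mulVec, hsum_mv]
    congr 1
    exact Finset.sum_congr rfl fun n _ => by rw [smul_mulVec, hvmv]
  rw [hmain]
  funext i
  have hbi : b i = c * ∑ n, lam n * st n i := by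
    simp [hb, bhat, hc, Finset.sum_apply, mul_comm]
  simp only [Pi.add_apply, Pi.smul_apply, Finset.sum_apply, Pi.sub_apply, smul_eq_mul,
    Qker, ← hμ, ← hA, ← hw, div_eq_mul_inv, ← hc]
  have expand : ∀ n : Fin P,
      lam n * ((P:ℝ) * lbar lam)⁻¹ * (1 + (φ n - μ) ⬝ᵥ w) * st n i
        = c * (lam n * st n i) + c * (lam n * (((φ n - μ) ⬝ᵥ w) * st n i)) := by
    intro n; rw [← hc]; ring
  rw [Finset.sum_congr rfl (fun n _ => expand n), Finset.sum_add_distrib,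
      ← Finset.mul_sum, ← Finset.mul_sum]
  have lhsum : ∑ n, lam n * (((φ n - μ) ⬝ᵥ w) * (st n i - b i))
      = ∑ n, lam n * (((φ n - μ) ⬝ᵥ w) * st n i) - (∑ n, lam n * ((φ n - μ) ⬝ᵥ w)) * b i := by
    rw [Finset.sum_mul, ← Finset.sum_sub_distrib]
    congr 1; funext n; ring
  rw [lhsum, hdot, hbi]
  ring
end

section
/- The fitted linear score estimator is exactly unbiased whenever the target means are affine in the features: if the targets s̃_1, …, s̃_P are integrable random vectors with E[s̃_n] = W*(φ_n − c) + w for all n, for some fixed W* ∈ ℝ^{D×F}, c ∈ ℝ^F, and w ∈ ℝ^D, then for every φ ∈ ℝ^F, E[ ŝ(φ) ] = W*(φ − c) + w. This holds for any fixed feature vectors φ_n and weights λ_n with Σ̂ invertible, independent of the number of samples P. -/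
open Matrix MeasureTheory BigOperators

lemma vecMulVec_add {F D : ℕ} (a : Fin F → ℝ) (x y : Fin D → ℝ) :
    vecMulVec a (x + y) = vecMulVec a x + vecMulVec a y := by
  ext i j; simp [vecMulVec, mul_add]

lemma vecMulVec_smul' {F D : ℕ} (a : Fin F → ℝ) (r : ℝ) (x : Fin D → ℝ) :
    vecMulVec a (r • x) = r • vecMulVec a x := by
  ext i j; simp [vecMulVec]; ring

lemma vecMulVec_mulVec {F D : ℕ} (a : Fin F → ℝ) (M : Matrix (Fin D) (Fin F) ℝ)
    (b : Fin F → ℝ) : vecMulVec a (M.mulVec b) = vecMulVec a b * Mᵀ := by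
  ext i j
  simp [vecMulVec, Matrix.mul_apply, Matrix.mulVec, dotProduct, Finset.mul_sum]
  exact Finset.sum_congr rfl fun k _ => by ring

lemma vecMulVec_self_transpose {F : ℕ} (a : Fin F → ℝ) :
    (vecMulVec a a)ᵀ = vecMulVec a a := by
  ext i j; simp [vecMulVec]; ring

lemma bhat_add {P D : ℕ} (lam : Fin P → ℝ) (s t : Fin P → Fin D → ℝ) :
    bhat lam (s + t) = bhat lam s + bhat lam t := by
  simp [bhat, smul_add, Finset.sum_add_distrib]

lemma bhat_smul {P D : ℕ} (lam : Fin P → ℝ) (r : ℝ) (s : Fin P → Fin D → ℝ) :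
    bhat lam (r • s) = r • bhat lam s := by
  funext d
  simp only [bhat, Pi.smul_apply, Finset.sum_apply, smul_eq_mul, Finset.mul_sum]
  exact Finset.sum_congr rfl fun n _ => by ring

lemma jhat_add {P F D : ℕ} (lam : Fin P → ℝ) (φ : Fin P → Fin F → ℝ)
    (s t : Fin P → Fin D → ℝ) :
    jhat lam φ (s + t) = jhat lam φ s + jhat lam φ t := by
  unfold jhat
  rw [bhat_add, ← neg_add, ← smul_add, ← Finset.sum_add_distrib]
  congr 2
  refine Finset.sum_congr rfl fun n _ => ?_
  rw [← smul_add, ← vecMulVec_add]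
  congr 1
  simp only [Pi.add_apply]
  abel

lemma jhat_smul {P F D : ℕ} (lam : Fin P → ℝ) (φ : Fin P → Fin F → ℝ)
    (r : ℝ) (s : Fin P → Fin D → ℝ) :
    jhat lam φ (r • s) = r • jhat lam φ s := by
  have h : ∀ n, (r • s) n - bhat lam (r • s) = r • (s n - bhat lam s) := by
    intro n
    rw [bhat_smul, Pi.smul_apply, ← smul_sub]
  unfold jhat
  simp_rw [h, vecMulVec_smul']
  rw [smul_neg, neg_inj, smul_comm r ((P : ℝ) * lbar lam)⁻¹]
  congr 1
  rw [Finset.smul_sum]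
  exact Finset.sum_congr rfl fun n _ => smul_comm _ _ _

lemma shatFit_add {P F D : ℕ} (lam : Fin P → ℝ) (φ : Fin P → Fin F → ℝ)
    (φv : Fin F → ℝ) (s t : Fin P → Fin D → ℝ) :
    shatFit lam φ (s + t) φv = shatFit lam φ s φv + shatFit lam φ t φv := by
  unfold shatFit
  rw [jhat_add, bhat_add, Matrix.transpose_add, Matrix.add_mul, Matrix.add_mulVec]
  abel

lemma shatFit_smul {P F D : ℕ} (lam : Fin P → ℝ) (φ : Fin P → Fin F → ℝ)
    (φv : Fin F → ℝ) (r : ℝ) (s : Fin P → Fin D → ℝ) :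
    shatFit lam φ (r • s) φv = r • shatFit lam φ s φv := by
  unfold shatFit
  rw [jhat_smul, bhat_smul, Matrix.transpose_smul, Matrix.smul_mul, smul_mulVec,
    smul_add]

lemma sighat_transpose {P F : ℕ} (lam : Fin P → ℝ) (φ : Fin P → Fin F → ℝ) :
    (sighat lam φ)ᵀ = sighat lam φ := by
  unfold sighat
  rw [Matrix.transpose_smul, Matrix.transpose_sum]
  simp_rw [Matrix.transpose_smul, vecMulVec_self_transpose]

lemma shatFit_affine {P F D : ℕ} (hP : 1 ≤ P) (lam : Fin P → ℝ) (hlam : ∀ n, 0 < lam n)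
    (φ : Fin P → Fin F → ℝ) (hinv : IsUnit (sighat lam φ).det)
    (W : Matrix (Fin D) (Fin F) ℝ) (c : Fin F → ℝ) (w : Fin D → ℝ) (φv : Fin F → ℝ) :
    shatFit lam φ (fun n => W.mulVec (φ n - c) + w) φv = W.mulVec (φv - c) + w := by
  set m : Fin P → Fin D → ℝ := fun n => W.mulVec (φ n - c) + w with hm
  have hPne : (P : ℝ) ≠ 0 := by positivity
  have hsum : 0 < ∑ n, lam n :=
    Finset.sum_pos (fun n _ => hlam n) ⟨⟨0, hP⟩, Finset.mem_univ _⟩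
  have hPl : (P : ℝ) * lbar lam = ∑ n, lam n := by
    unfold lbar; field_simp
  have hone : ((P : ℝ) * lbar lam)⁻¹ * ∑ n, lam n = 1 := by
    rw [hPl]; exact inv_mul_cancel₀ (ne_of_gt hsum)
  have hb : bhat lam m = W.mulVec (muhat lam φ) - W.mulVec c + w := by
    have h1 : ∑ n, lam n • m n
        = W.mulVec (∑ n, lam n • φ n) - (∑ n, lam n) • W.mulVec c
          + (∑ n, lam n) • w := by
      have h2 : ∑ n, lam n • m n
          = ∑ n, (W.mulVec (lam n • φ n) - lam n • W.mulVec c + lam n • w) := by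
        refine Finset.sum_congr rfl fun n _ => ?_
        rw [hm]
        simp only [smul_add, smul_sub, Matrix.mulVec_sub, Matrix.mulVec_smul,
          smul_sub]
      rw [h2, Finset.sum_add_distrib, Finset.sum_sub_distrib, ← Finset.sum_smul,
        ← Finset.sum_smul]
      congr 1
      congr 1
      exact (map_sum W.mulVecLin (fun n => lam n • φ n) Finset.univ).symm
    unfold bhat muhat
    rw [h1, smul_add, smul_sub, smul_smul, smul_smul, hone, one_smul, one_smul,
      Matrix.mulVec_smul]
  have hdiff : ∀ n, m n - bhat lam m = W.mulVec (φ n - muhat lam φ) := by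
    intro n
    rw [hb]
    simp only [hm]
    rw [Matrix.mulVec_sub, Matrix.mulVec_sub]
    abel
  have hj : jhat lam φ m = -(sighat lam φ * Wᵀ) := by
    unfold jhat sighat
    simp_rw [hdiff, _root_.vecMulVec_mulVec]
    rw [Matrix.smul_mul, Matrix.sum_mul]
    simp_rw [Matrix.smul_mul]
  have hT : (jhat lam φ m)ᵀ * (sighat lam φ)⁻¹ = -W := by
    rw [hj, Matrix.transpose_neg, Matrix.transpose_mul, Matrix.transpose_transpose,
      sighat_transpose, Matrix.neg_mul, Matrix.mul_assoc,
      Matrix.mul_nonsing_inv _ hinv, Matrix.mul_one]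
  show ((jhat lam φ m)ᵀ * (sighat lam φ)⁻¹).mulVec (muhat lam φ - φv) + bhat lam m = _
  rw [hT, hb, Matrix.neg_mulVec, Matrix.mulVec_sub, Matrix.mulVec_sub]
  abel


/-- the fitted linear score estimator is exactly unbiased whenever the target
means are affine in the features: if `E[s̃ₙ] = W*(φₙ − c) + w` for all `n`, then
`E[ŝ(φ)] = W*(φ − c) + w` for every `φ`, independent of the number of samples `P`. -/
theorem linear_estimator_unbiased {Ω : Type*} [MeasureSpace Ω]
    [IsProbabilityMeasure (volume : Measure Ω)] {P F D : ℕ}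
    (hP : 1 ≤ P) (hF : 1 ≤ F) (hD : 1 ≤ D)
    (lam : Fin P → ℝ) (hlam : ∀ n, 0 < lam n) (φ : Fin P → Fin F → ℝ)
    (st : Fin P → Ω → Fin D → ℝ) (hint : ∀ n, Integrable (st n))
    (hinv : IsUnit (sighat lam φ).det)
    (Wstar : Matrix (Fin D) (Fin F) ℝ) (c : Fin F → ℝ) (w : Fin D → ℝ)
    (hmean : ∀ n, (∫ ω, st n ω) = Wstar.mulVec (φ n - c) + w) :
    ∀ φv : Fin F → ℝ,
      (∫ ω, shatFit lam φ (fun n => st n ω) φv) = Wstar.mulVec (φv - c) + w := by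
  intro φv
  classical
  let L : (Fin P → Fin D → ℝ) →ₗ[ℝ] (Fin D → ℝ) :=
    { toFun := fun s => shatFit lam φ s φv
      map_add' := shatFit_add lam φ φv
      map_smul' := shatFit_smul lam φ φv }
  let Lc : (Fin P → Fin D → ℝ) →L[ℝ] (Fin D → ℝ) := LinearMap.toContinuousLinearMap L
  have hS : Integrable (fun ω => (fun n => st n ω)) (volume : Measure Ω) := by
    have heq : (fun ω => (fun n => st n ω)) =
        fun ω => ∑ n, (LinearMap.toContinuousLinearMap
          (LinearMap.single ℝ (fun _ : Fin P => Fin D → ℝ) n)) (st n ω) := by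
      funext ω
      exact (Finset.univ_sum_single (fun n => st n ω)).symm
    rw [heq]
    exact integrable_finset_sum _ fun n _ =>
      (LinearMap.toContinuousLinearMap _).integrable_comp (hint n)
  have hmean' : (∫ ω, (fun n => st n ω)) = fun n => Wstar.mulVec (φ n - c) + w := by
    funext n
    have h := (ContinuousLinearMap.proj (R := ℝ)
      (φ := fun _ : Fin P => (Fin D → ℝ)) n).integral_comp_comm hS
    rw [← hmean n]
    exact h.symm
  calc (∫ ω, shatFit lam φ (fun n => st n ω) φv)
      = ∫ ω, Lc (fun n => st n ω) := rfl
    _ = Lc (∫ ω, (fun n => st n ω)) := Lc.integral_comp_comm hS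
    _ = shatFit lam φ (fun n => Wstar.mulVec (φ n - c) + w) φv := by rw [hmean']; rfl
    _ = Wstar.mulVec (φv - c) + w := shatFit_affine hP lam hlam φ hinv Wstar c w φv
end

section
/- If the targets s̃_1, …, s̃_P are independent square-integrable random vectors with covariance matrices C_n := Cov(s̃_n), then the covariance of the fitted linear score estimator between two feature inputs is Cov( ŝ_i(φ), ŝ_j(φ') ) = Σ_{n=1}^P ( λ_n / (P λ̄) )² Q_n(φ) Q_n(φ') (C_n)_{ij} for all φ, φ' ∈ ℝ^F and i, j ∈ {1, …, D}, where Q_n(φ) := 1 + (φ_n − μ̂)ᵀ Σ̂^{-1} (φ − μ̂). -/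
open Matrix MeasureTheory BigOperators

section Aux
variable {P F D : ℕ}

lemma hT_eq (hP : 1 ≤ P) (lam : Fin P → ℝ) : (P:ℝ) * lbar lam = ∑ n, lam n := by
  have h : (P:ℝ) ≠ 0 := Nat.cast_ne_zero.2 (by omega)
  rw [lbar, ← mul_assoc, mul_inv_cancel₀ h, one_mul]

lemma hT_pos (hP : 1 ≤ P) (lam : Fin P → ℝ) (hlam : ∀ n, 0 < lam n) :
    0 < (P:ℝ) * lbar lam := by
  rw [hT_eq hP]
  exact Finset.sum_pos (fun n _ => hlam n) ⟨⟨0, by omega⟩, Finset.mem_univ _⟩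

lemma shat_linear (hP : 1 ≤ P) (lam : Fin P → ℝ) (hlam : ∀ n, 0 < lam n)
    (φ : Fin P → Fin F → ℝ) (st : Fin P → Fin D → ℝ) (φv : Fin F → ℝ) (i : Fin D) :
    shatFit lam φ st φv i
      = ∑ n, (lam n / ((P:ℝ) * lbar lam)) * Qker lam φ n φv * st n i := by
  have hT := hT_eq hP lam
  have hTpos := hT_pos hP lam hlam
  have hTne : ((P:ℝ) * lbar lam) ≠ 0 := ne_of_gt hTpos
  set T : ℝ := (P:ℝ) * lbar lam with hTdef
  set M := (sighat lam φ)⁻¹ with hM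
  set z : Fin F → ℝ := M.mulVec (φv - muhat lam φ) with hz
  set k : Fin P → ℝ := fun n => (φ n - muhat lam φ) ⬝ᵥ z with hk
  have hQ : ∀ n, Qker lam φ n φv = 1 + k n := fun n => rfl
  have hsum0 : ∀ f : Fin F, ∑ n, lam n * (φ n f - muhat lam φ f) = 0 := by
    intro f
    have h1 : ∑ n, lam n * (φ n f - muhat lam φ f)
        = (∑ n, lam n * φ n f) - (∑ n, lam n) * muhat lam φ f := by
      simp [mul_sub, Finset.sum_sub_distrib, ← Finset.sum_mul]
    have hmu : muhat lam φ f = T⁻¹ * ∑ n, lam n * φ n f := by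
      simp [muhat, ← hTdef, Finset.sum_apply, mul_comm]
    rw [h1, ← hT, hmu]
    field_simp
    ring
  have hksum : ∑ n, lam n * k n = 0 := by
    have h2 : ∑ n, lam n * k n = ∑ f, (∑ n, lam n * (φ n f - muhat lam φ f)) * z f := by
      simp only [hk, dotProduct, Pi.sub_apply, Finset.sum_mul, Finset.mul_sum]
      rw [Finset.sum_comm]
      exact Finset.sum_congr rfl fun f _ => Finset.sum_congr rfl fun n _ => by ring
    rw [h2]
    simp [hsum0]
  have hbh : bhat lam st i = T⁻¹ * ∑ n, lam n * st n i := by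
    simp [bhat, ← hTdef, Finset.sum_apply, mul_comm]
  have hy : M.mulVec (muhat lam φ - φv) = -z := by
    rw [hz, ← Matrix.mulVec_neg, neg_sub]
  have key : ((jhat lam φ st)ᵀ * M).mulVec (muhat lam φ - φv) i
      = T⁻¹ * ∑ n, lam n * k n * (st n i - bhat lam st i) := by
    rw [← Matrix.mulVec_mulVec, hy]
    simp only [Matrix.mulVec, dotProduct, Matrix.transpose_apply, jhat, Matrix.neg_apply,
      Matrix.smul_apply, Matrix.sum_apply, Pi.smul_apply, Matrix.vecMulVec_apply,
      Pi.neg_apply, Pi.sub_apply, smul_eq_mul, ← hTdef]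
    trans ∑ x : Fin F, ∑ n : Fin P,
        T⁻¹ * (lam n * ((φ n x - muhat lam φ x) * (st n i - bhat lam st i)) * z x)
    · refine Finset.sum_congr rfl fun x _ => ?_
      rw [neg_mul_neg, mul_assoc, Finset.sum_mul, Finset.mul_sum]
    · rw [Finset.sum_comm, Finset.mul_sum]
      refine Finset.sum_congr rfl fun n _ => ?_
      have h3 : lam n * k n * (st n i - bhat lam st i)
          = ∑ x, lam n * ((φ n x - muhat lam φ x) * z x) * (st n i - bhat lam st i) := by
        simp only [hk, dotProduct, Pi.sub_apply]
        rw [Finset.mul_sum, Finset.sum_mul]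
      rw [h3, Finset.mul_sum]
      exact Finset.sum_congr rfl fun x _ => by ring
  show ((jhat lam φ st)ᵀ * M).mulVec (muhat lam φ - φv) i + bhat lam st i = _
  rw [key]
  have h1 : ∑ n, lam n * k n * (st n i - bhat lam st i) = ∑ n, lam n * k n * st n i := by
    rw [Finset.sum_congr rfl (fun n _ => mul_sub (lam n * k n) (st n i) (bhat lam st i)),
      Finset.sum_sub_distrib, ← Finset.sum_mul, hksum]
    simp
  rw [h1, hbh]
  simp only [hQ]
  rw [Finset.mul_sum, Finset.mul_sum, ← Finset.sum_add_distrib]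
  exact Finset.sum_congr rfl fun n _ => by field_simp; ring
end Aux

/-- if the targets `s̃₁, …, s̃_P` are independent square-integrable random
vectors with covariance matrices `Cₙ`, then the covariance of the fitted linear score
estimator between two feature inputs is
`Cov(ŝᵢ(φ), ŝⱼ(φ')) = ∑ₙ (λₙ/(Pλ̄))² Qₙ(φ) Qₙ(φ') (Cₙ)ᵢⱼ`. -/
theorem linear_estimator_covariance {Ω : Type*} [MeasureSpace Ω]
    [IsProbabilityMeasure (volume : Measure Ω)] {P F D : ℕ}
    (hP : 1 ≤ P) (hF : 1 ≤ F) (hD : 1 ≤ D)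
    (lam : Fin P → ℝ) (hlam : ∀ n, 0 < lam n) (φ : Fin P → Fin F → ℝ)
    (st : Fin P → Ω → Fin D → ℝ)
    (hsq : ∀ n, MemLp (st n) 2 (volume : Measure Ω))
    (hindep : ProbabilityTheory.iIndepFun
      st volume)
    (hinv : IsUnit (sighat lam φ).det)
    (C : Fin P → Matrix (Fin D) (Fin D) ℝ)
    (hC : ∀ n, C n = Matrix.of fun i j =>
      ∫ ω, (st n ω i - ∫ ω', st n ω' i) * (st n ω j - ∫ ω', st n ω' j)) :
    ∀ (φv φv' : Fin F → ℝ) (i j : Fin D),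
      (∫ ω, (shatFit lam φ (fun n => st n ω) φv i -
              ∫ ω', shatFit lam φ (fun n => st n ω') φv i) *
            (shatFit lam φ (fun n => st n ω) φv' j -
              ∫ ω', shatFit lam φ (fun n => st n ω') φv' j)) =
        ∑ n, (lam n / ((P : ℝ) * lbar lam)) ^ 2 *
          Qker lam φ n φv * Qker lam φ n φv' * C n i j := by
  intro φv φv' i j
  -- coefficients
  set a : Fin P → ℝ := fun n => lam n / ((P:ℝ) * lbar lam) * Qker lam φ n φv with ha
  set b : Fin P → ℝ := fun n => lam n / ((P:ℝ) * lbar lam) * Qker lam φ n φv' with hb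
  -- component integrability
  have hcomp : ∀ (n : Fin P) (d : Fin D), MemLp (fun ω => st n ω d) 2 (volume : Measure Ω) := by
    intro n d
    have := (ContinuousLinearMap.proj (R := ℝ) (φ := fun _ : Fin D => ℝ) d).comp_memLp' (hsq n)
    exact this
  have hint : ∀ (n : Fin P) (d : Fin D), Integrable (fun ω => st n ω d) volume :=
    fun n d => (hcomp n d).integrable one_le_two
  set m : Fin P → ℝ := fun n => ∫ ω, st n ω i with hm
  set mk : Fin P → ℝ := fun n => ∫ ω, st n ω j with hmk
  set X : Fin P → Ω → ℝ := fun n ω => st n ω i - m n with hX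
  set Y : Fin P → Ω → ℝ := fun n ω => st n ω j - mk n with hY
  have hXmem : ∀ n, MemLp (X n) 2 (volume : Measure Ω) :=
    fun n => (hcomp n i).sub (memLp_const _)
  have hYmem : ∀ n, MemLp (Y n) 2 (volume : Measure Ω) :=
    fun n => (hcomp n j).sub (memLp_const _)
  have hXint : ∀ n, Integrable (X n) volume := fun n => (hXmem n).integrable one_le_two
  have hYint : ∀ n, Integrable (Y n) volume := fun n => (hYmem n).integrable one_le_two
  have hXzero : ∀ n, (∫ ω, X n ω) = 0 := by
    intro n
    rw [hX]
    simp only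
    rw [integral_sub (hint n i) (integrable_const _), integral_const]
    simp [hm]
  have hYzero : ∀ n, (∫ ω, Y n ω) = 0 := by
    intro n
    rw [hY]
    simp only
    rw [integral_sub (hint n j) (integrable_const _), integral_const]
    simp [hmk]
  -- linearity of shatFit
  have hrw1 : ∀ ω, shatFit lam φ (fun n => st n ω) φv i = ∑ n, a n * st n ω i := by
    intro ω
    rw [shat_linear hP lam hlam]
  have hrw2 : ∀ ω, shatFit lam φ (fun n => st n ω) φv' j = ∑ n, b n * st n ω j := by
    intro ω
    rw [shat_linear hP lam hlam]
  have hE1 : (∫ ω', shatFit lam φ (fun n => st n ω') φv i) = ∑ n, a n * m n := by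
    simp_rw [hrw1]
    rw [integral_finset_sum _ (fun n _ => (hint n i).const_mul (a n))]
    exact Finset.sum_congr rfl fun n _ => integral_const_mul _ _
  have hE2 : (∫ ω', shatFit lam φ (fun n => st n ω') φv' j) = ∑ n, b n * mk n := by
    simp_rw [hrw2]
    rw [integral_finset_sum _ (fun n _ => (hint n j).const_mul (b n))]
    exact Finset.sum_congr rfl fun n _ => integral_const_mul _ _
  have hcent1 : ∀ ω, shatFit lam φ (fun n => st n ω) φv i -
      (∫ ω', shatFit lam φ (fun n => st n ω') φv i) = ∑ n, a n * X n ω := by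
    intro ω
    rw [hrw1, hE1, ← Finset.sum_sub_distrib]
    exact Finset.sum_congr rfl fun n _ => by rw [hX]; ring
  have hcent2 : ∀ ω, shatFit lam φ (fun n => st n ω) φv' j -
      (∫ ω', shatFit lam φ (fun n => st n ω') φv' j) = ∑ n, b n * Y n ω := by
    intro ω
    rw [hrw2, hE2, ← Finset.sum_sub_distrib]
    exact Finset.sum_congr rfl fun n _ => by rw [hY]; ring
  -- products integrable
  have hmulint : ∀ n l, Integrable (fun ω => X n ω * Y l ω) volume := by
    intro n l
    have h := (hYmem l).smul (𝕜 := ℝ) (hXmem n)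
      (p := 2) (q := 2) (r := 1)
    rw [memLp_one_iff_integrable] at h
    exact h
  -- cross covariances vanish
  have hcross : ∀ n l, n ≠ l → (∫ ω, X n ω * Y l ω) = 0 := by
    intro n l hnl
    have hind : ProbabilityTheory.IndepFun (X n) (Y l) volume := by
      have h0 := hindep.indepFun hnl
      exact h0.comp ((measurable_pi_apply i).sub measurable_const)
        ((measurable_pi_apply j).sub measurable_const)
    have h2 : (∫ ω, X n ω * Y l ω) = (∫ ω, X n ω) * ∫ ω, Y l ω :=
      hind.integral_mul_eq_mul_integral (hXint n).aestronglyMeasurable (hYint l).aestronglyMeasurable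
    rw [h2, hXzero n, hYzero l]
    ring
  -- main computation
  calc (∫ ω, (shatFit lam φ (fun n => st n ω) φv i -
              ∫ ω', shatFit lam φ (fun n => st n ω') φv i) *
            (shatFit lam φ (fun n => st n ω) φv' j -
              ∫ ω', shatFit lam φ (fun n => st n ω') φv' j))
      = ∫ ω, ∑ n, ∑ l, (a n * b l) * (X n ω * Y l ω) := by
        simp_rw [hcent1, hcent2, Finset.sum_mul_sum, mul_mul_mul_comm]
    _ = ∑ n, ∑ l, (a n * b l) * ∫ ω, X n ω * Y l ω := by
        rw [integral_finset_sum _ (fun n _ =>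
          integrable_finset_sum _ (fun l _ => ((hmulint n l).const_mul _)))]
        exact Finset.sum_congr rfl fun n _ => by
          rw [integral_finset_sum _ (fun l _ => ((hmulint n l).const_mul _))]
          exact Finset.sum_congr rfl fun l _ => integral_const_mul _ _
    _ = ∑ n, (a n * b n) * ∫ ω, X n ω * Y n ω := by
        refine Finset.sum_congr rfl fun n _ => ?_
        refine Finset.sum_eq_single_of_mem n (Finset.mem_univ n) fun l _ hln => ?_
        rw [hcross n l (Ne.symm hln)]  -- careful direction
        ring
    _ = ∑ n, (lam n / ((P : ℝ) * lbar lam)) ^ 2 *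
          Qker lam φ n φv * Qker lam φ n φv' * C n i j := by
        refine Finset.sum_congr rfl fun n _ => ?_
        have hCn : C n i j = ∫ ω, X n ω * Y n ω := by
          rw [hC n]
          rfl
        rw [hCn, ha, hb]
        ring
end

section
/- The off-sample output of the gradient-flow-trained infinite-width network has the closed-form solution r(τ)ᵀ := ŝ₀ᵀ + kᵀ K^{-1} ( I_P − exp(−τKΛ/P) ) ( S̃ − Ŝ₀ ): this r satisfies r(0) = ŝ₀ and, for every τ ∈ ℝ, d/dτ r(τ)ᵀ = (1/P) kᵀ Λ ( S̃ − Ŝ(τ) ), where Ŝ(τ) := exp(−τKΛ/P) Ŝ₀ + ( I_P − exp(−τKΛ/P) ) S̃. -/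
open Matrix BigOperators

/-- The closed-form gradient-flow solution on the training samples,
`Ŝ(τ) = exp(−τKΛ/P) Ŝ₀ + (I − exp(−τKΛ/P)) S̃`. -/
noncomputable def trainSol {P D : ℕ} (K Λm : Matrix (Fin P) (Fin P) ℝ)
    (Stil Shat0 : Matrix (Fin P) (Fin D) ℝ) (τ : ℝ) : Matrix (Fin P) (Fin D) ℝ :=
  NormedSpace.exp ((-τ) • ((P : ℝ)⁻¹ • (K * Λm))) * Shat0 +
    (1 - NormedSpace.exp ((-τ) • ((P : ℝ)⁻¹ • (K * Λm)))) * Stil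

/-- The off-sample output closed form,
`r(τ)ᵀ = ŝ₀ᵀ + kᵀ K⁻¹ (I − exp(−τKΛ/P)) (S̃ − Ŝ₀)`, as a row vector in `ℝ^D`. -/
noncomputable def offSampleSol {P D : ℕ} (K Λm : Matrix (Fin P) (Fin P) ℝ)
    (Stil Shat0 : Matrix (Fin P) (Fin D) ℝ) (k : Fin P → ℝ) (s0 : Fin D → ℝ)
    (τ : ℝ) : Fin D → ℝ :=
  s0 + Matrix.vecMul k
    (K⁻¹ * (1 - NormedSpace.exp ((-τ) • ((P : ℝ)⁻¹ • (K * Λm)))) * (Stil - Shat0))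

/-- `r(τ)ᵀ = ŝ₀ᵀ + kᵀ K⁻¹ (I − exp(−τKΛ/P)) (S̃ − Ŝ₀)` satisfies
`r(0) = ŝ₀` and, for every `τ`, `d/dτ r(τ)ᵀ = (1/P) kᵀ Λ (S̃ − Ŝ(τ))` (entrywise), where
`Ŝ(τ) = exp(−τKΛ/P) Ŝ₀ + (I − exp(−τKΛ/P)) S̃`. -/
theorem ntk_off_sample_closed_form {P D : ℕ} (hP : 1 ≤ P) (hD : 1 ≤ D)
    (K Λm : Matrix (Fin P) (Fin P) ℝ) (hK : IsUnit K.det)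
    (Stil Shat0 : Matrix (Fin P) (Fin D) ℝ) (k : Fin P → ℝ) (s0 : Fin D → ℝ) :
    offSampleSol K Λm Stil Shat0 k s0 0 = s0 ∧
      ∀ (τ : ℝ) (d : Fin D),
        HasDerivAt (fun τ' => offSampleSol K Λm Stil Shat0 k s0 τ' d)
          ((P : ℝ)⁻¹ *
            Matrix.vecMul k (Λm * (Stil - trainSol K Λm Stil Shat0 τ)) d) τ := by
  letI : SeminormedRing (Matrix (Fin P) (Fin P) ℝ) := Matrix.linftyOpSemiNormedRing
  letI : NormedRing (Matrix (Fin P) (Fin P) ℝ) := Matrix.linftyOpNormedRing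
  letI : NormedAlgebra ℝ (Matrix (Fin P) (Fin P) ℝ) := Matrix.linftyOpNormedAlgebra
  set A : Matrix (Fin P) (Fin P) ℝ := (P : ℝ)⁻¹ • (K * Λm) with hA
  constructor
  · simp [offSampleSol, NormedSpace.exp_zero]
  · intro τ d
    -- the linear map M ↦ (kᵀ K⁻¹ M (S̃ − Ŝ₀))_d
    set L : Matrix (Fin P) (Fin P) ℝ →ₗ[ℝ] ℝ :=
      { toFun := fun M => Matrix.vecMul k (K⁻¹ * M * (Stil - Shat0)) d
        map_add' := by
          intro M N
          simp [Matrix.mul_add, Matrix.add_mul, Matrix.vecMul_add]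
        map_smul' := by
          intro c M
          simp only [Matrix.mul_smul, Matrix.smul_mul, RingHom.id_apply]
          simp [Matrix.vecMul, dotProduct, Finset.mul_sum, mul_left_comm] } with hL
    have hexp : HasDerivAt (fun τ' : ℝ => NormedSpace.exp ((-τ') • A))
        (-(A * NormedSpace.exp ((-τ) • A))) τ := by
      have h1 := hasDerivAt_exp_smul_const' (𝕂 := ℝ) A (-τ)
      have h2 : HasDerivAt (fun t : ℝ => -t) (-1) τ := hasDerivAt_neg τ
      have := h1.scomp τ h2
      convert this using 1
      · rfl
      · rfl
      · rfl
      · rfl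
      · rw [neg_one_smul]
        rfl
    have hmain : HasDerivAt (fun τ' : ℝ => s0 d + L (1 - NormedSpace.exp ((-τ') • A)))
        (L (A * NormedSpace.exp ((-τ) • A))) τ := by
      have hsub : HasDerivAt (fun τ' : ℝ => (1 : Matrix (Fin P) (Fin P) ℝ)
          - NormedSpace.exp ((-τ') • A)) (A * NormedSpace.exp ((-τ) • A)) τ := by
        have := hexp.const_sub (1 : Matrix (Fin P) (Fin P) ℝ)
        convert this using 1
        · rfl
        · rfl
        · rfl
        · exact (neg_neg _).symm
      have := (L.toContinuousLinearMap.hasFDerivAt).comp_hasDerivAt τ hsub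
      exact this.const_add (s0 d)
    have heq1 : (fun τ' : ℝ => s0 d + L (1 - NormedSpace.exp ((-τ') • A)))
        = fun τ' => offSampleSol K Λm Stil Shat0 k s0 τ' d := by
      funext τ'
      simp [offSampleSol, hL, hA]
    have heq2 : L (A * NormedSpace.exp ((-τ) • A))
        = (P : ℝ)⁻¹ * Matrix.vecMul k (Λm * (Stil - trainSol K Λm Stil Shat0 τ)) d := by
      set E := NormedSpace.exp ((-τ) • A) with hE
      have hS : Stil - trainSol K Λm Stil Shat0 τ = E * (Stil - Shat0) := by
        simp only [trainSol, ← hA, ← hE, Matrix.mul_sub, Matrix.sub_mul, Matrix.one_mul]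
        abel
      have hKinv : K⁻¹ * K = 1 := Matrix.nonsing_inv_mul K hK
      simp only [hL, LinearMap.coe_mk, AddHom.coe_mk, hS, hA]
      have hmat : K⁻¹ * ((P : ℝ)⁻¹ • (K * Λm) * E) * (Stil - Shat0)
          = (P : ℝ)⁻¹ • (Λm * (E * (Stil - Shat0))) := by
        rw [Matrix.smul_mul, Matrix.mul_smul, Matrix.smul_mul]
        congr 1
        calc K⁻¹ * (K * Λm * E) * (Stil - Shat0)
            = K⁻¹ * K * (Λm * (E * (Stil - Shat0))) := by
              simp only [Matrix.mul_assoc]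
          _ = Λm * (E * (Stil - Shat0)) := by rw [hKinv, Matrix.one_mul]
      rw [hmat]
      simp [Matrix.vecMul, dotProduct, Finset.mul_sum, mul_left_comm]
    rw [← heq1, ← heq2] at *
    exact hmain
end
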